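/- arXiv:2005.11103 — 3 statements merged into one kernel-verified Lean document; each statement's English description precedes it below -/
import Mathlib

section
/- Let e ∈ gl(m|n)₀ be the regular nilpotent element above and let the elements e_{i,j;r} be as defined. Then every e_{i,j;r} commutes with e in the super sense: [e, e_{i,j;r}] = 0, so each e_{i,j;r} lies in the centralizer g_e. -/
abbrev Idx (m n : ℕ) := Fin m ⊕ Fin n

/-- The row of a basis index in the two-row pyramid: `true` = even row (length `m`),
`false` = odd row (length `n`). -/
def rowOf {m n : ℕ} : Idx m n → Bool := Sum.isLeft

/-- The column of a basis index in the two-row pyramid (odd row in columns `1,…,n`,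
even row right-aligned in columns `n-m+1,…,n`). -/
def colZ (m n : ℕ) : Idx m n → ℤ :=
  Sum.elim (fun i => (n : ℤ) - m + i + 1) (fun j => (j : ℤ) + 1)

/-- The regular nilpotent `e ∈ gl(m|n)₀`. -/
noncomputable def esup (m n : ℕ) : Matrix (Idx m n) (Idx m n) ℂ :=
  fun a b =>
    match a, b with
    | Sum.inl i, Sum.inl j => if (i : ℕ) + 1 = (j : ℕ) then 1 else 0
    | Sum.inr i, Sum.inr j => if (i : ℕ) + 1 = (j : ℕ) then 1 else 0
    | _, _ => 0

/-- `e_{i,j;r} = Σ_{(h,k) : row(h)=i, row(k)=j, col(k)−col(h)=r} e_{h,k}`. -/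
noncomputable def Ebasis (m n : ℕ) (r1 r2 : Bool) (r : ℤ) : Matrix (Idx m n) (Idx m n) ℂ :=
  fun h k => if rowOf h = r1 ∧ rowOf k = r2 ∧ colZ m n k - colZ m n h = r then 1 else 0

/-- The admissible index set `K` of triples `(i,j,r)` for the regular nilpotent pyramid. -/
def inK (m n : ℕ) (r1 r2 : Bool) (r : ℤ) : Prop :=
  (r1 = true ∧ r2 = true ∧ 0 ≤ r ∧ r ≤ (m : ℤ) - 1) ∨
  (r1 = false ∧ r2 = false ∧ 0 ≤ r ∧ r ≤ (n : ℤ) - 1) ∨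
  (r1 = true ∧ r2 = false ∧ 0 ≤ r ∧ r ≤ (m : ℤ) - 1) ∨
  (r1 = false ∧ r2 = true ∧ (n : ℤ) - m ≤ r ∧ r ≤ (n : ℤ) - 1)

lemma mulLl (m n : ℕ) (M : Matrix (Idx m n) (Idx m n) ℂ) (i : Fin m) (k : Idx m n) :
    (esup m n * M) (Sum.inl i) k =
      if h : (i : ℕ) + 1 < m then M (Sum.inl ⟨i + 1, h⟩) k else 0 := by
  rw [Matrix.mul_apply, Fintype.sum_sum_type]
  simp only [esup, ite_mul, one_mul, zero_mul, Finset.sum_const_zero, add_zero]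
  split
  · next h =>
    have : ∀ j : Fin m, ((i : ℕ) + 1 = (j : ℕ)) ↔ ((⟨i + 1, h⟩ : Fin m) = j) := by
      intro j; simp [Fin.ext_iff]
    simp_rw [this]
    rw [Finset.sum_ite_eq]; simp
  · next h =>
    rw [Finset.sum_eq_zero]; intro j _; rw [if_neg]; omega

lemma mulLr (m n : ℕ) (M : Matrix (Idx m n) (Idx m n) ℂ) (i : Fin n) (k : Idx m n) :
    (esup m n * M) (Sum.inr i) k =
      if h : (i : ℕ) + 1 < n then M (Sum.inr ⟨i + 1, h⟩) k else 0 := by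
  rw [Matrix.mul_apply, Fintype.sum_sum_type]
  simp only [esup, ite_mul, one_mul, zero_mul, Finset.sum_const_zero, zero_add]
  split
  · next h =>
    have : ∀ j : Fin n, ((i : ℕ) + 1 = (j : ℕ)) ↔ ((⟨i + 1, h⟩ : Fin n) = j) := by
      intro j; simp [Fin.ext_iff]
    simp_rw [this]
    rw [Finset.sum_ite_eq]; simp
  · next h =>
    rw [Finset.sum_eq_zero]; intro j _; rw [if_neg]; omega

lemma mulRl (m n : ℕ) (M : Matrix (Idx m n) (Idx m n) ℂ) (h : Idx m n) (j : Fin m) :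
    (M * esup m n) h (Sum.inl j) =
      if hj : 0 < (j : ℕ) then M h (Sum.inl ⟨(j : ℕ) - 1, by omega⟩) else 0 := by
  rw [Matrix.mul_apply, Fintype.sum_sum_type]
  simp only [esup, mul_ite, mul_one, mul_zero, Finset.sum_const_zero, add_zero]
  split
  · next hj =>
    have : ∀ i : Fin m, ((i : ℕ) + 1 = (j : ℕ)) ↔ (i = (⟨(j : ℕ) - 1, by omega⟩ : Fin m)) := by
      intro i; simp [Fin.ext_iff]; omega
    simp_rw [this]
    rw [Finset.sum_ite_eq']; simp
  · next hj =>
    rw [Finset.sum_eq_zero]; intro i _; rw [if_neg]; omega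

lemma mulRr (m n : ℕ) (M : Matrix (Idx m n) (Idx m n) ℂ) (h : Idx m n) (j : Fin n) :
    (M * esup m n) h (Sum.inr j) =
      if hj : 0 < (j : ℕ) then M h (Sum.inr ⟨(j : ℕ) - 1, by omega⟩) else 0 := by
  rw [Matrix.mul_apply, Fintype.sum_sum_type]
  simp only [esup, mul_ite, mul_one, mul_zero, Finset.sum_const_zero, zero_add]
  split
  · next hj =>
    have : ∀ i : Fin n, ((i : ℕ) + 1 = (j : ℕ)) ↔ (i = (⟨(j : ℕ) - 1, by omega⟩ : Fin n)) := by
      intro i; simp [Fin.ext_iff]; omega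
    simp_rw [this]
    rw [Finset.sum_ite_eq']; simp
  · next hj =>
    rw [Finset.sum_eq_zero]; intro i _; rw [if_neg]; omega

/-- Every `e_{i,j;r}` with `(i,j,r) ∈ K` supercommutes with `e`: `[e, e_{i,j;r}] = 0`
(as `e` is even, the super bracket is the ordinary commutator), so `e_{i,j;r} ∈ g_e`. -/
theorem Ebasis_in_centralizer (m n : ℕ) (hmn : m ≤ n) (r1 r2 : Bool) (r : ℤ)
    (hK : inK m n r1 r2 r) :
    esup m n * Ebasis m n r1 r2 r - Ebasis m n r1 r2 r * esup m n = 0 := by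
  have hK' : 0 ≤ r ∧ r ≤ (n : ℤ) - 1 := by
    rcases hK with ⟨_,_,h1,h2⟩|⟨_,_,h1,h2⟩|⟨_,_,h1,h2⟩|⟨_,_,h1,h2⟩ <;>
      constructor <;> omega
  ext h k
  rcases h with i|i <;> rcases k with j|j <;>
    simp only [Matrix.sub_apply, Matrix.zero_apply, mulLl, mulLr, mulRl, mulRr] <;>
    rcases r1 <;> rcases r2 <;>
    rcases hK with ⟨h1,h2,hr1,hr2⟩|⟨h1,h2,hr1,hr2⟩|⟨h1,h2,hr1,hr2⟩|⟨h1,h2,hr1,hr2⟩ <;>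
    simp_all only [Bool.false_eq_true, Bool.true_eq_false] <;>
    split_ifs <;>
    simp_all [Ebasis, rowOf, colZ]
  all_goals try split_ifs
  all_goals try simp_all
  all_goals (have hi := i.2; have hj := j.2; omega)
end

section
/- Let E = Σ_{(i,j) ∈ I^d × I^d} a_{i,j} e_{i,j} ∈ End(V^{⊗d}) commute with the operators z_k = 1^{⊗(k−1)} ⊗ e ⊗ 1^{⊗(d−k)} for all 1 ≤ k ≤ d, where e is the regular nilpotent of gl(m|n). Then a_{s, j−ı_k} = a_{s+ı_k, j} for all multi-indices s, j and all k for which the shifted indices are defined; consequently a_{i,j} = a_{s,t} whenever (row(i), row(j), col(j)−col(i)) = (row(s), row(t), col(t)−col(s)). -/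
noncomputable def sgn (a : ZMod 2) : ℂ := (-1 : ℂ) ^ a.val

def par {m n : ℕ} : Idx m n → ZMod 2 := Sum.elim (fun _ => 0) (fun _ => 1)

/-- The successor of an index one step along its row of the pyramid, if it exists. -/
def nextI (m n : ℕ) : Idx m n → Option (Idx m n)
  | Sum.inl i => if h : (i : ℕ) + 1 < m then some (Sum.inl ⟨(i : ℕ) + 1, h⟩) else none
  | Sum.inr j => if h : (j : ℕ) + 1 < n then some (Sum.inr ⟨(j : ℕ) + 1, h⟩) else none

/-- `z_k = 1^{⊗(k-1)} ⊗ e ⊗ 1^{⊗(d-k)}` acting on `V^{⊗ d}`, as a matrix on multi-indices. -/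
noncomputable def Zmat (m n d : ℕ) (k : Fin d) :
    Matrix (Fin d → Idx m n) (Fin d → Idx m n) ℂ :=
  fun h t => (∏ l ∈ Finset.univ.erase k, if h l = t l then (1 : ℂ) else 0) *
    esup m n (h k) (t k)

/-- The Koszul sign `α(ε,δ) = Π_{1≤s<t≤d} (-1)^{δ_s ε_t}`. -/
noncomputable def alphaC {d : ℕ} (ε δ : Fin d → ZMod 2) : ℂ :=
  ∏ q ∈ Finset.univ.filter (fun q : Fin d × Fin d => q.1 < q.2), sgn (δ q.1 * ε q.2)

/-- The operator `E = Σ_{i,j} a_{i,j} e_{i,j}` on `V^{⊗ d}`, where the tensor-product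
matrix units `e_{i,j}` act with Koszul signs: `e_{h,k} v_t = δ_{k,t} α(ε_h+ε_k, ε_t) v_h`. -/
noncomputable def Emat (m n d : ℕ) (a : (Fin d → Idx m n) → (Fin d → Idx m n) → ℂ) :
    Matrix (Fin d → Idx m n) (Fin d → Idx m n) ℂ :=
  fun h k => a h k * alphaC (fun l => par (h l) + par (k l)) (fun l => par (k l))

lemma sgn_ne_zero (a : ZMod 2) : sgn a ≠ 0 := pow_ne_zero _ (by norm_num)

lemma alphaC_ne_zero {d : ℕ} (ε δ : Fin d → ZMod 2) : alphaC ε δ ≠ 0 :=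
  Finset.prod_ne_zero_iff.2 fun _ _ => sgn_ne_zero _

lemma nextI_inj {m n : ℕ} {x y z : Idx m n} (hx : nextI m n x = some z)
    (hy : nextI m n y = some z) : x = y := by
  cases x <;> cases y <;> simp only [nextI] at hx hy <;> split_ifs at hx hy <;>
      simp only [Option.some.injEq] at hx hy <;> subst hx <;>
    simp_all only [Sum.inl.injEq, Sum.inr.injEq, Fin.ext_iff, reduceCtorEq] <;> omega

lemma nextI_spec {m n : ℕ} {x y : Idx m n} (h : nextI m n x = some y) :
    par y = par x ∧ rowOf y = rowOf x ∧ colZ m n y = colZ m n x + 1 := by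
  cases x with
  | inl i =>
    simp only [nextI] at h
    split_ifs at h
    simp only [Option.some.injEq] at h
    subst h
    refine ⟨rfl, rfl, ?_⟩
    simp only [colZ, Sum.elim_inl]
    push_cast
    ring
  | inr j =>
    simp only [nextI] at h
    split_ifs at h
    simp only [Option.some.injEq] at h
    subst h
    refine ⟨rfl, rfl, ?_⟩
    simp only [colZ, Sum.elim_inr]
    push_cast
    ring

lemma esup_eq_ite {m n : ℕ} (x y : Idx m n) :
    esup m n x y = if nextI m n x = some y then 1 else 0 := by
  cases x with
  | inl i => cases y with
    | inl j =>
      have hj := j.isLt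
      simp only [esup, nextI]
      split_ifs <;> simp_all [Fin.ext_iff] <;> omega
    | inr j =>
      simp only [esup, nextI]
      split_ifs <;> simp_all
  | inr i => cases y with
    | inl j =>
      simp only [esup, nextI]
      split_ifs <;> simp_all
    | inr j =>
      have hj := j.isLt
      simp only [esup, nextI]
      split_ifs <;> simp_all [Fin.ext_iff] <;> omega

lemma colZ_le {m n : ℕ} (x : Idx m n) : colZ m n x ≤ n := by
  cases x with
  | inl i => have := i.isLt; simp [colZ]; omega
  | inr j => have := j.isLt; simp [colZ]

lemma nextI_exists {m n : ℕ} (x : Idx m n) (h : colZ m n x < n) :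
    ∃ y, nextI m n x = some y := by
  cases x with
  | inl i =>
    have hi := i.isLt
    simp only [colZ, Sum.elim_inl] at h
    have hm : (i : ℕ) + 1 < m := by omega
    exact ⟨Sum.inl ⟨(i : ℕ) + 1, hm⟩, by simp [nextI, hm]⟩
  | inr j =>
    simp only [colZ, Sum.elim_inr] at h
    have hn : (j : ℕ) + 1 < n := by omega
    exact ⟨Sum.inr ⟨(j : ℕ) + 1, hn⟩, by simp [nextI, hn]⟩

lemma eq_of_row_col {m n : ℕ} {x y : Idx m n} (hr : rowOf x = rowOf y)
    (hc : colZ m n x = colZ m n y) : x = y := by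
  cases x <;> cases y <;> simp_all [rowOf, colZ, Fin.ext_iff] <;> omega

lemma mulZ_right {m n d : ℕ} (a : (Fin d → Idx m n) → (Fin d → Idx m n) → ℂ)
    (s j : Fin d → Idx m n) (k : Fin d) (w : Idx m n)
    (hw : nextI m n w = some (j k)) :
    (Emat m n d a * Zmat m n d k) s j = Emat m n d a s (Function.update j k w) := by
  rw [Matrix.mul_apply]
  rw [Finset.sum_eq_single (Function.update j k w)]
  · have h1 : (∏ l ∈ Finset.univ.erase k,
        if Function.update j k w l = j l then (1 : ℂ) else 0) = 1 := by
      apply Finset.prod_eq_one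
      intro l hl
      rw [Function.update_of_ne (Finset.ne_of_mem_erase hl)]
      simp
    have h2 : esup m n (Function.update j k w k) (j k) = 1 := by
      rw [Function.update_self, esup_eq_ite, if_pos hw]
    rw [Zmat, h1, h2, one_mul, mul_one]
  · intro g _ hg
    suffices h : Zmat m n d k g j = 0 by rw [h, mul_zero]
    by_cases hall : ∀ l, l ≠ k → g l = j l
    · have hk : g k ≠ w := by
        intro h
        apply hg
        funext l
        by_cases hl : l = k
        · subst hl; rw [Function.update_self, h]
        · rw [Function.update_of_ne hl]; exact hall l hl
      have : esup m n (g k) (j k) = 0 := by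
        rw [esup_eq_ite, if_neg]
        intro h
        exact hk (nextI_inj h hw)
      rw [Zmat, this, mul_zero]
    · push_neg at hall
      obtain ⟨l, hl, hgl⟩ := hall
      rw [Zmat]
      apply mul_eq_zero_of_left
      exact Finset.prod_eq_zero (Finset.mem_erase.2 ⟨hl, Finset.mem_univ l⟩) (if_neg hgl)
  · intro h
    exact absurd (Finset.mem_univ _) h

lemma mulZ_left {m n d : ℕ} (a : (Fin d → Idx m n) → (Fin d → Idx m n) → ℂ)
    (s j : Fin d → Idx m n) (k : Fin d) (u : Idx m n)
    (hu : nextI m n (s k) = some u) :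
    (Zmat m n d k * Emat m n d a) s j = Emat m n d a (Function.update s k u) j := by
  rw [Matrix.mul_apply]
  rw [Finset.sum_eq_single (Function.update s k u)]
  · have h1 : (∏ l ∈ Finset.univ.erase k,
        if s l = Function.update s k u l then (1 : ℂ) else 0) = 1 := by
      apply Finset.prod_eq_one
      intro l hl
      rw [Function.update_of_ne (Finset.ne_of_mem_erase hl)]
      simp
    have h2 : esup m n (s k) (Function.update s k u k) = 1 := by
      rw [Function.update_self, esup_eq_ite, if_pos hu]
    rw [Zmat, h1, h2, one_mul, one_mul]
  · intro g _ hg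
    suffices h : Zmat m n d k s g = 0 by rw [h, zero_mul]
    by_cases hall : ∀ l, l ≠ k → s l = g l
    · have hk : g k ≠ u := by
        intro h
        apply hg
        funext l
        by_cases hl : l = k
        · subst hl; rw [Function.update_self, h]
        · rw [Function.update_of_ne hl]; exact (hall l hl).symm
      have : esup m n (s k) (g k) = 0 := by
        rw [esup_eq_ite, if_neg]
        intro h
        rw [hu] at h
        exact hk (Option.some.inj h).symm
      rw [Zmat, this, mul_zero]
    · push_neg at hall
      obtain ⟨l, hl, hgl⟩ := hall
      rw [Zmat]
      apply mul_eq_zero_of_left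
      exact Finset.prod_eq_zero (Finset.mem_erase.2 ⟨hl, Finset.mem_univ l⟩) (if_neg hgl)
  · intro h
    exact absurd (Finset.mem_univ _) h

/-- If `E = Σ a_{i,j} e_{i,j}` commutes with every `z_k = 1^{⊗(k-1)} ⊗ e ⊗ 1^{⊗(d-k)}`,
then `a_{s, j−ı_k} = a_{s+ı_k, j}` whenever the shifted indices are defined; consequently
`a_{i,j} = a_{s,t}` whenever `(row i, row j, col j − col i) = (row s, row t, col t − col s)`. -/
theorem coefficients_constant_on_diagonals (m n d : ℕ)
    (a : (Fin d → Idx m n) → (Fin d → Idx m n) → ℂ)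
    (hcomm : ∀ k : Fin d, Emat m n d a * Zmat m n d k = Zmat m n d k * Emat m n d a) :
    (∀ (s j : Fin d → Idx m n) (k : Fin d) (u w : Idx m n),
        nextI m n (s k) = some u → nextI m n w = some (j k) →
        a s (Function.update j k w) = a (Function.update s k u) j) ∧
    (∀ i j s t : Fin d → Idx m n,
        (∀ k : Fin d, rowOf (i k) = rowOf (s k) ∧ rowOf (j k) = rowOf (t k) ∧
          colZ m n (j k) - colZ m n (i k) = colZ m n (t k) - colZ m n (s k)) →
        a i j = a s t) := by
  have key1 : ∀ (s j : Fin d → Idx m n) (k : Fin d) (u w : Idx m n),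
      nextI m n (s k) = some u → nextI m n w = some (j k) →
      a s (Function.update j k w) = a (Function.update s k u) j := by
    intro s j k u w hu hw
    have h := congrFun (congrFun (hcomm k) s) j
    rw [mulZ_right a s j k w hw, mulZ_left a s j k u hu] at h
    have hpu : par u = par (s k) := (nextI_spec hu).1
    have hpw : par w = par (j k) := ((nextI_spec hw).1).symm
    have hδ : (fun l => par (Function.update j k w l)) = fun l => par (j l) := by
      funext l
      by_cases hl : l = k
      · subst hl; rw [Function.update_self, hpw]
      · rw [Function.update_of_ne hl]
    have hε : (fun l => par (s l) + par (Function.update j k w l)) =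
        fun l => par (Function.update s k u l) + par (j l) := by
      funext l
      by_cases hl : l = k
      · subst hl; rw [Function.update_self, Function.update_self, hpw, hpu]
      · rw [Function.update_of_ne hl, Function.update_of_ne hl]
    simp only [Emat] at h
    rw [hδ, hε] at h
    exact mul_right_cancel₀ (alphaC_ne_zero _ _) h
  refine ⟨key1, ?_⟩
  -- one-step pair shift
  have step : ∀ (b c : Fin d → Idx m n) (k : Fin d) (x x' y y' : Idx m n),
      nextI m n x = some x' → nextI m n y = some y' →
      a (Function.update b k x) (Function.update c k y)
        = a (Function.update b k x') (Function.update c k y') := by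
    intro b c k x x' y y' hx hy
    have h := key1 (Function.update b k x) (Function.update c k y') k x' y
      (by rw [Function.update_self]; exact hx)
      (by rw [Function.update_self]; exact hy)
    rwa [Function.update_idem, Function.update_idem] at h
  -- N-step pair shift
  have shiftN : ∀ (N : ℕ) (b c : Fin d → Idx m n) (k : Fin d) (x x' y y' : Idx m n),
      rowOf x = rowOf x' → rowOf y = rowOf y' →
      colZ m n x' = colZ m n x + N → colZ m n y' = colZ m n y + N →
      a (Function.update b k x) (Function.update c k y)
        = a (Function.update b k x') (Function.update c k y') := by
    intro N
    induction N with
    | zero =>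
      intro b c k x x' y y' hrx hry hcx hcy
      simp only [Nat.cast_zero, add_zero] at hcx hcy
      rw [eq_of_row_col hrx hcx.symm, eq_of_row_col hry hcy.symm]
    | succ N ih =>
      intro b c k x x' y y' hrx hry hcx hcy
      have hx' : colZ m n x < n := by
        have := colZ_le (m := m) (n := n) x'
        push_cast at hcx
        omega
      have hy' : colZ m n y < n := by
        have := colZ_le (m := m) (n := n) y'
        push_cast at hcy
        omega
      obtain ⟨x₁, hx₁⟩ := nextI_exists x hx'
      obtain ⟨y₁, hy₁⟩ := nextI_exists y hy'
      obtain ⟨-, hrx₁, hcx₁⟩ := nextI_spec hx₁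
      obtain ⟨-, hry₁, hcy₁⟩ := nextI_spec hy₁
      rw [step b c k x x₁ y y₁ hx₁ hy₁]
      apply ih b c k x₁ x' y₁ y' (hrx₁.trans hrx) (hry₁.trans hry)
      · push_cast at hcx ⊢; omega
      · push_cast at hcy ⊢; omega
  -- general pair move
  have pairAll : ∀ (b c : Fin d → Idx m n) (k : Fin d) (x x' y y' : Idx m n),
      rowOf x = rowOf x' → rowOf y = rowOf y' →
      colZ m n y - colZ m n x = colZ m n y' - colZ m n x' →
      a (Function.update b k x) (Function.update c k y)
        = a (Function.update b k x') (Function.update c k y') := by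
    intro b c k x x' y y' hrx hry hc
    rcases le_or_gt (colZ m n x) (colZ m n x') with h | h
    · apply shiftN (colZ m n x' - colZ m n x).toNat b c k x x' y y' hrx hry
      · rw [Int.toNat_of_nonneg (by omega)]; ring
      · rw [Int.toNat_of_nonneg (by omega)]; omega
    · symm
      apply shiftN (colZ m n x - colZ m n x').toNat b c k x' x y' y hrx.symm hry.symm
      · rw [Int.toNat_of_nonneg (by omega)]; ring
      · rw [Int.toNat_of_nonneg (by omega)]; omega
  intro i j s t h
  have main : ∀ K : Finset (Fin d),
      a i j = a (fun l => if l ∈ K then s l else i l) (fun l => if l ∈ K then t l else j l) := by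
    intro K
    induction K using Finset.induction with
    | empty => simp
    | @insert k K hk ih =>
      rw [ih]
      have hb : (fun l => if l ∈ insert k K then s l else i l)
          = Function.update (fun l => if l ∈ K then s l else i l) k (s k) := by
        funext l
        by_cases hl : l = k
        · subst hl; simp [hk]
        · rw [Function.update_of_ne hl]
          simp [Finset.mem_insert, hl]
      have hc : (fun l => if l ∈ insert k K then t l else j l)
          = Function.update (fun l => if l ∈ K then t l else j l) k (t k) := by
        funext l
        by_cases hl : l = k
        · subst hl; simp [hk]
        · rw [Function.update_of_ne hl]
          simp [Finset.mem_insert, hl]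
      have hb0 : (fun l => if l ∈ K then s l else i l)
          = Function.update (fun l => if l ∈ K then s l else i l) k (i k) := by
        funext l
        by_cases hl : l = k
        · subst hl; simp [hk]
        · rw [Function.update_of_ne hl]
      have hc0 : (fun l => if l ∈ K then t l else j l)
          = Function.update (fun l => if l ∈ K then t l else j l) k (j k) := by
        funext l
        by_cases hl : l = k
        · subst hl; simp [hk]
        · rw [Function.update_of_ne hl]
      rw [hb, hc]
      nth_rewrite 1 [hb0, hc0]
      exact pairAll _ _ k (i k) (s k) (j k) (t k) (h k).1 (h k).2.1 (h k).2.2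
  have := main Finset.univ
  simpa using this
end

section
/- Suppose Φ : B → A and Ψ : C → A are homomorphisms of filtered algebras such that the images of the associated graded maps satisfy (gr Φ)(gr B) = Z_{gr A}((gr Ψ)(gr C)), and that A is finite-dimensional (so filtrations are bounded). Then on the filtered level Φ(B) = Z_A(Ψ(C)), i.e., the double-centralizer property lifts from the associated graded. -/
noncomputable def prevF {A : Type*} [Ring A] [Algebra ℂ A]
    (F : ℕ → Submodule ℂ A) (n : ℕ) : Submodule ℂ A :=
  ⨆ m < n, F m

lemma prevF_zero {A : Type*} [Ring A] [Algebra ℂ A] (F : ℕ → Submodule ℂ A) :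
    prevF F 0 = ⊥ := by
  apply le_bot_iff.mp
  exact iSup₂_le fun m hm => absurd hm (Nat.not_lt_zero m)

lemma prevF_le {A : Type*} [Ring A] [Algebra ℂ A] (F : ℕ → Submodule ℂ A)
    (hFmono : Monotone F) {n : ℕ} (hn : 0 < n) : prevF F n ≤ F (n - 1) :=
  iSup₂_le fun m hm => hFmono (by omega)

lemma le_prevF {A : Type*} [Ring A] [Algebra ℂ A] (F : ℕ → Submodule ℂ A)
    {k n : ℕ} (hk : k < n) : F k ≤ prevF F n :=
  le_iSup₂ (f := fun m (_ : m < n) => F m) k hk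

/-- Lifting the double centralizer property from the associated graded level: if
`Φ : B → A` and `Ψ : C → A` are homomorphisms of filtered algebras with
`Φ(B) ⊆ Z_A(Ψ(C))`, `A` is finite dimensional with bounded exhaustive filtration, and
`(gr Φ)(gr B) = Z_{gr A}((gr Ψ)(gr C))` (stated in terms of representatives), then
`Φ(B) = Z_A(Ψ(C))`. -/
theorem gr_double_centralizer_lifts {A B C : Type*} [Ring A] [Ring B] [Ring C]
    [Algebra ℂ A] [Algebra ℂ B] [Algebra ℂ C] [FiniteDimensional ℂ A]
    (Φ : B →ₐ[ℂ] A) (Ψ : C →ₐ[ℂ] A)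
    (F : ℕ → Submodule ℂ A) (G : ℕ → Submodule ℂ B) (H : ℕ → Submodule ℂ C)
    (hFmono : Monotone F) (hGmono : Monotone G) (hHmono : Monotone H)
    (hFmul : ∀ i j : ℕ, ∀ x y : A, x ∈ F i → y ∈ F j → x * y ∈ F (i + j))
    (hFbound : ∃ N, F N = ⊤)
    (hGex : ∀ b : B, ∃ n, b ∈ G n)
    (hHex : ∀ c : C, ∃ n, c ∈ H n)
    (hΦ : ∀ n : ℕ, ∀ b ∈ G n, Φ b ∈ F n)
    (hΨ : ∀ n : ℕ, ∀ c ∈ H n, Ψ c ∈ F n)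
    (hcent : ∀ (b : B) (c : C), Φ b * Ψ c = Ψ c * Φ b)
    (hgr : ∀ (n : ℕ) (x : A), x ∈ F n →
      ((∃ b ∈ G n, x - Φ b ∈ prevF F n) ↔
        (∀ (m : ℕ) (y : A), y ∈ F m → (∃ c ∈ H m, y - Ψ c ∈ prevF F m) →
          x * y - y * x ∈ prevF F (n + m)))) :
    Set.range Φ = {a : A | ∀ c : C, a * Ψ c = Ψ c * a} := by
  ext a
  simp only [Set.mem_range, Set.mem_setOf_eq]
  constructor
  · rintro ⟨b, rfl⟩ c; exact hcent b c
  · intro ha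
    obtain ⟨N, hN⟩ := hFbound
    suffices h : ∀ n, ∀ x : A, x ∈ F n → (∀ c : C, x * Ψ c = Ψ c * x) → ∃ b, Φ b = x from
      h N a (hN ▸ Submodule.mem_top) ha
    intro n
    induction n using Nat.strong_induction_on with
    | _ n ih =>
      intro x hx hxc
      have key : ∃ b ∈ G n, x - Φ b ∈ prevF F n := by
        rw [hgr n x hx]
        rintro m y hy ⟨c, hc, hr⟩
        have hre : x * y - y * x = x * (y - Ψ c) - (y - Ψ c) * x := by
          rw [mul_sub, sub_mul, hxc c]; abel
        rw [hre]
        rcases Nat.eq_zero_or_pos m with hm | hm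
        · subst hm
          have h0 : y - Ψ c = 0 := by
            have := prevF_zero F ▸ hr
            simpa using this
          rw [h0]
          simp
        · have hr' : y - Ψ c ∈ F (m - 1) := prevF_le F hFmono hm hr
          have h1 : x * (y - Ψ c) ∈ F (n + (m - 1)) := hFmul _ _ _ _ hx hr'
          have h2 : (y - Ψ c) * x ∈ F ((m - 1) + n) := hFmul _ _ _ _ hr' hx
          have hlt : n + (m - 1) < n + m := by omega
          have hlt2 : (m - 1) + n < n + m := by omega
          exact Submodule.sub_mem _ (le_prevF F hlt h1) (le_prevF F hlt2 h2)
      obtain ⟨b, hb, hxb⟩ := key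
      rcases Nat.eq_zero_or_pos n with hn | hn
      · subst hn
        have h0 : x - Φ b = 0 := by
          have := prevF_zero F ▸ hxb
          simpa using this
        exact ⟨b, (sub_eq_zero.mp h0).symm⟩
      · have hxb' : x - Φ b ∈ F (n - 1) := prevF_le F hFmono hn hxb
        have hc' : ∀ c, (x - Φ b) * Ψ c = Ψ c * (x - Φ b) := by
          intro c; rw [sub_mul, mul_sub, hxc c, hcent b c]
        obtain ⟨b', hb'⟩ := ih (n - 1) (by omega) _ hxb' hc'
        exact ⟨b + b', by rw [map_add, hb']; abel⟩
end
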